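/- Let S = {1, 2, …, n} with n ≥ 3, let P be an irreducible stochastic matrix on S, and let μ be a probability measure consistent with P. If the set 𝒞(μ) of possible coalescing pairs comprises exactly the single pair {1,2}, then Σ_{j=3}^n p_{1,j} = Σ_{j=3}^n p_{2,j} = Σ_{i=3}^n (p_{i,1} + p_{i,2}). -/

import Mathlib

open MeasureTheory

namespace CFTP

variable {S : Type*}

/-- Forward composition `f_t ∘ f_{t-1} ∘ ⋯ ∘ f_1` (functions are indexed by 1,2,…). -/
def fwd (f : ℕ → S → S) : ℕ → S → S
  | 0 => id
  | t + 1 => f (t + 1) ∘ fwd f t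

/-- Backward composition `f_1 ∘ f_2 ∘ ⋯ ∘ f_t`. -/
def bwd (f : ℕ → S → S) : ℕ → S → S
  | 0 => id
  | t + 1 => bwd f t ∘ f (t + 1)

/-- `k_t(f⃗)`: the number of equivalence classes of `i ~ j ↔ f⃗_t i = f⃗_t j`,
i.e. the cardinality of the image of the forward composition. -/
noncomputable def ktF (f : ℕ → S → S) (t : ℕ) : ℕ := Set.ncard (Set.range (fwd f t))

/-- `k_t(f⃖)`: the cardinality of the image of the backward composition. -/
noncomputable def ktB (f : ℕ → S → S) (t : ℕ) : ℕ := Set.ncard (Set.range (bwd f t))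

/-- `k(f⃗)`: the eventual (= minimal) value of the non-increasing sequence `k_t(f⃗)`. -/
noncomputable def kF (f : ℕ → S → S) : ℕ := ⨅ t, ktF f t

/-- `k(f⃖)`. -/
noncomputable def kB (f : ℕ → S → S) : ℕ := ⨅ t, ktB f t

/-- `μbar` is the joint law of an i.i.d. sequence with one-step law `ν`,
i.e. the countable product measure `∏_{s ∈ ℕ} ν`, characterised by its
values on cylinder events. -/
def IsIID [MeasurableSpace S] (ν : Measure (S → S)) (μbar : Measure (ℕ → S → S)) : Prop :=
  ∀ (I : Finset ℕ) (g : ℕ → S → S),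
    μbar {F | ∀ s ∈ I, F s = g s} = ∏ s ∈ I, ν {g s}

/-- The support of a probability measure on the finite set `F_S`. -/
def supp [MeasurableSpace S] (ν : Measure (S → S)) : Set (S → S) := {f | 0 < ν {f}}

/-- A stochastic matrix: nonnegative entries, row sums one. -/
def IsStochastic [Fintype S] (P : S → S → ℝ) : Prop :=
  (∀ i j, 0 ≤ P i j) ∧ ∀ i, ∑ j, P i j = 1

/-- `ν ∈ L(P)`: the measure `ν` on `F_S` is consistent with the matrix `P`. -/
def Consistent [Fintype S] [MeasurableSpace S] (P : S → S → ℝ) (ν : Measure (S → S)) : Prop :=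
  ∀ i j, ν {f : S → S | f i = j} = ENNReal.ofReal (P i j)

/-- Irreducibility: for all `i j` some power of `P` has positive `(i,j)` entry. -/
def Irred [Fintype S] [DecidableEq S] (P : S → S → ℝ) : Prop :=
  ∀ i j, ∃ t, 1 ≤ t ∧ 0 < ((Matrix.of P) ^ t) i j

/-- Aperiodicity: for each `i`, the gcd of `{t ≥ 1 : (P^t)_{i,i} > 0}` is `1`,
expressed as: every common divisor of that set equals `1`. -/
def Aperiodic [Fintype S] [DecidableEq S] (P : S → S → ℝ) : Prop :=
  ∀ i, ∀ d : ℕ, (∀ t, 1 ≤ t → 0 < ((Matrix.of P) ^ t) i i → d ∣ t) → d = 1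

/-- A function is constant. -/
def IsConst (g : S → S) : Prop := ∀ i j, g i = g j

/-- The backward coalescence time `C`. -/
noncomputable def Ctime (F : ℕ → S → S) : ℕ∞ :=
  sInf ((fun t : ℕ => (t : ℕ∞)) '' {t : ℕ | 1 ≤ t ∧ IsConst (bwd F t)})

/-- The forward coalescence time `T`. -/
noncomputable def Ttime (F : ℕ → S → S) : ℕ∞ :=
  sInf ((fun t : ℕ => (t : ℕ∞)) '' {t : ℕ | 1 ≤ t ∧ IsConst (fwd F t)})

/-- The 0-1 matrix `M_f`. -/
noncomputable def Mmat [Fintype S] [DecidableEq S] (f : S → S) : Matrix S S ℝ :=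
  Matrix.of fun i j => if f i = j then 1 else 0

/-- The product `M_{f_t} M_{f_{t-1}} ⋯ M_{f_1}`. -/
noncomputable def Mprod [Fintype S] [DecidableEq S] (f : ℕ → S → S) : ℕ → Matrix S S ℝ
  | 0 => 1
  | t + 1 => Mmat (f (t + 1)) * Mprod f t

/-- The event that states `i` and `j` coalesce. -/
def coalEvent (i j : S) : Set (ℕ → S → S) := {F | ∃ t, 1 ≤ t ∧ fwd F t i = fwd F t j}

/-!
If `{x, y}` is the only pair that can coalesce, every map `f` in the support of `ν` is injective
except that it may glue `x` and `y`. Since `x` and `y` do coalesce, some support map `g` glues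
them, and running `g` after `f` shows that `f` can send two states onto `x` and `y` only if these
are `x` and `y` themselves. Hence `f x ∈ {x, y} ↔ f y ∈ {x, y}`, and the number of states outside
`{x, y}` sent into `{x, y}` is `0` or `1` according as `f x ∈ {x, y}` or not (the latter by
pigeonhole). All three sums in the theorem are `ν`-averages of these per-map counts.
-/

def GluesOnly (x y : S) (f : S → S) : Prop :=
  ∀ a b, a ≠ b → f a = f b → s(a, b) = s(x, y)

section Combinatorics

open Finset

variable {x y : S} {f : S → S}

theorem GluesOnly.injective_of_apply_ne (hf : GluesOnly x y f) (hfxy : f x ≠ f y) :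
    Function.Injective f := by
  intro a b hab
  by_contra hne
  rcases Sym2.eq_iff.1 (hf a b hne hab) with ⟨rfl, rfl⟩ | ⟨rfl, rfl⟩
  · exact hfxy hab
  · exact hfxy hab.symm

variable [DecidableEq S]

theorem GluesOnly.pair_eq_of_apply_mem_pair (hf : GluesOnly x y f)
    (hpull : ∀ a b, f a = x → f b = y → s(a, b) = s(x, y)) {a b : S} (hab : a ≠ b)
    (ha : f a ∈ ({x, y} : Finset S)) (hb : f b ∈ ({x, y} : Finset S)) :
    s(a, b) = s(x, y) := by
  by_cases hfab : f a = f b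
  · exact hf a b hab hfab
  simp only [mem_insert, mem_singleton] at ha hb
  rcases ha with ha | ha <;> rcases hb with hb | hb
  · exact absurd (ha.trans hb.symm) hfab
  · exact hpull a b ha hb
  · rw [Sym2.eq_swap]; exact hpull b a hb ha
  · exact absurd (ha.trans hb.symm) hfab

variable [Fintype S]

theorem GluesOnly.apply_mem_pair_of_apply_ne (hf : GluesOnly x y f)
    (hpull : ∀ a b, f a = x → f b = y → s(a, b) = s(x, y)) (hfxy : f x ≠ f y) :
    f x ∈ ({x, y} : Finset S) ∧ f y ∈ ({x, y} : Finset S) := by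
  have hsurj := Finite.surjective_of_injective (hf.injective_of_apply_ne hfxy)
  obtain ⟨a, ha⟩ := hsurj x
  obtain ⟨b, hb⟩ := hsurj y
  rcases Sym2.eq_iff.1 (hpull a b ha hb) with ⟨rfl, rfl⟩ | ⟨rfl, rfl⟩ <;> simp [ha, hb]

theorem GluesOnly.apply_mem_pair_iff (hf : GluesOnly x y f)
    (hpull : ∀ a b, f a = x → f b = y → s(a, b) = s(x, y)) :
    f x ∈ ({x, y} : Finset S) ↔ f y ∈ ({x, y} : Finset S) := by
  by_cases hfxy : f x = f y
  · rw [hfxy]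
  · exact iff_of_true (hf.apply_mem_pair_of_apply_ne hpull hfxy).1
      (hf.apply_mem_pair_of_apply_ne hpull hfxy).2

theorem GluesOnly.exists_apply_mem_pair (hf : GluesOnly x y f) (hxy : x ≠ y)
    (hfx : f x ∉ ({x, y} : Finset S)) : ∃ i ∉ ({x, y} : Finset S), f i ∈ ({x, y} : Finset S) := by
  -- Pigeonhole: `f` is injective on the `card S - 1` states other than `y`, which cannot all
  -- be sent into the `card S - 2` states outside `{x, y}`.
  by_contra! hout
  have hcard : #({x, y} : Finset S)ᶜ < #(univ.erase y) := by
    rw [card_compl, card_pair hxy, card_erase_of_mem (mem_univ y), card_univ]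
    have : 2 ≤ Fintype.card S := by
      simpa [card_pair hxy] using card_le_univ ({x, y} : Finset S)
    omega
  have hmaps : Set.MapsTo f (univ.erase y : Finset S) (({x, y} : Finset S)ᶜ : Finset S) := by
    intro i hi
    simp only [coe_erase, coe_univ, Set.mem_sdiff, Set.mem_univ, Set.mem_singleton_iff,
      true_and] at hi
    simp only [coe_compl, Set.mem_compl_iff, mem_coe]
    by_cases hix : i = x
    · exact hix ▸ hfx
    · exact hout i (by simp [hix, hi])
  obtain ⟨a, ha, b, hb, hab, hfab⟩ := exists_ne_map_eq_of_card_lt_of_maps_to hcard hmaps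
  rcases Sym2.eq_iff.1 (hf a b hab hfab) with ⟨_, rfl⟩ | ⟨rfl, _⟩
  · simp at hb
  · simp at ha

theorem GluesOnly.card_filter_apply_mem_pair (hf : GluesOnly x y f)
    (hpull : ∀ a b, f a = x → f b = y → s(a, b) = s(x, y)) (hxy : x ≠ y) :
    #{i ∈ ({x, y} : Finset S)ᶜ | f i ∈ ({x, y} : Finset S)} =
      if f x ∈ ({x, y} : Finset S) then 0 else 1 := by
  have mem_pair_of_ne {a b : S} (hab : a ≠ b) (ha : f a ∈ ({x, y} : Finset S))
      (hb : f b ∈ ({x, y} : Finset S)) : a ∈ ({x, y} : Finset S) := by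
    simpa using Sym2.mem_iff.1 (hf.pair_eq_of_apply_mem_pair hpull hab ha hb ▸
      Sym2.mem_mk_left a b)
  split_ifs with hfx
  · refine card_eq_zero.2 (filter_eq_empty_iff.2 fun i hi hfi => ?_)
    rw [mem_compl] at hi
    exact hi (mem_pair_of_ne (fun h => hi (h ▸ by simp)) hfi hfx)
  refine le_antisymm (card_le_one.2 fun a ha b hb => ?_) (card_pos.2 ?_)
  · simp only [mem_filter, mem_compl] at ha hb
    by_contra hab
    exact ha.1 (mem_pair_of_ne hab ha.2 hb.2)
  · obtain ⟨i, hi, hfi⟩ := hf.exists_apply_mem_pair hxy hfx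
    exact ⟨i, mem_filter.2 ⟨mem_compl.2 hi, hfi⟩⟩

end Combinatorics

theorem fwd_congr {F g : ℕ → S → S} {t : ℕ} (h : ∀ s ∈ Finset.Icc 1 t, F s = g s) :
    fwd F t = fwd g t := by
  induction t with
  | zero => rfl
  | succ t ih =>
    simp only [fwd]
    rw [h (t + 1) (by simp), ih fun s hs => h s (by simp at hs ⊢; omega)]

theorem injective_fwd {F : ℕ → S → S} (hF : ∀ s, Function.Injective (F s)) (t : ℕ) :
    Function.Injective (fwd F t) := by
  induction t with
  | zero => exact Function.injective_id
  | succ t ih => exact (hF (t + 1)).comp ih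

section Coalescence

variable [MeasurableSpace S] {ν : Measure (S → S)} {μbar : Measure (ℕ → S → S)}

theorem coalEvent_pos_of_fwd_eq (hiid : IsIID ν μbar) {g : ℕ → S → S} {t : ℕ} (ht : 1 ≤ t)
    (hg : ∀ s ∈ Finset.Icc 1 t, g s ∈ supp ν) {a b : S} (hab : fwd g t a = fwd g t b) :
    0 < μbar (coalEvent a b) :=
  calc 0 < ∏ s ∈ Finset.Icc 1 t, ν {g s} :=
        pos_iff_ne_zero.2 (Finset.prod_ne_zero_iff.2 fun s hs => (hg s hs).ne')
    _ = μbar {F | ∀ s ∈ Finset.Icc 1 t, F s = g s} := (hiid _ _).symm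
    _ ≤ μbar (coalEvent a b) := measure_mono fun F hF => ⟨t, ht, by rw [fwd_congr hF]; exact hab⟩

theorem exists_mem_supp_not_injective [Finite S] (hiid : IsIID ν μbar) {a b : S} (hab : a ≠ b)
    (hpos : 0 < μbar (coalEvent a b)) : ∃ g ∈ supp ν, ¬ Function.Injective g := by
  by_contra! hinj
  -- Unless some `F s` falls outside the support, every `fwd F t` is injective.
  have hsub : coalEvent a b ⊆ ⋃ s, ⋃ g ∈ (supp ν)ᶜ, {F : ℕ → S → S | F s = g} := by
    rintro F ⟨t, -, ht⟩
    by_contra hF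
    simp only [Set.mem_iUnion, Set.mem_ofPred_eq, exists_prop, not_exists, not_and] at hF
    exact hab (injective_fwd (fun s => hinj _ (by_contra fun h => hF s _ h rfl)) t ht)
  refine hpos.ne' (measure_mono_null hsub (measure_iUnion_null fun s => ?_))
  refine (measure_biUnion_null_iff (Set.to_countable _)).2 fun g hg => ?_
  have hcyl := hiid {s} fun _ => g
  simp only [Finset.mem_singleton, forall_eq, Finset.prod_singleton] at hcyl
  simpa [supp, hcyl] using hg

variable {x y : S}

theorem gluesOnly_of_mem_supp (hiid : IsIID ν μbar)
    (honly : ∀ a b, a ≠ b → 0 < μbar (coalEvent a b) → s(a, b) = s(x, y))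
    {f : S → S} (hf : f ∈ supp ν) : GluesOnly x y f := fun a b hab hfab =>
  honly a b hab (coalEvent_pos_of_fwd_eq hiid le_rfl (g := fun _ => f) (by simpa using hf)
    (by simpa [fwd] using hfab))

theorem gluesOnly_comp_of_mem_supp (hiid : IsIID ν μbar)
    (honly : ∀ a b, a ≠ b → 0 < μbar (coalEvent a b) → s(a, b) = s(x, y))
    {f g : S → S} (hf : f ∈ supp ν) (hg : g ∈ supp ν) : GluesOnly x y (g ∘ f) :=
  fun a b hab hfab =>
  honly a b hab (coalEvent_pos_of_fwd_eq hiid (t := 2) (g := fun s => if s = 1 then f else g)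
    one_le_two (fun s _ => by split_ifs <;> assumption) (by simpa [fwd] using hfab))

theorem exists_mem_supp_apply_eq [Finite S] (hiid : IsIID ν μbar)
    (honly : ∀ a b, a ≠ b → 0 < μbar (coalEvent a b) → s(a, b) = s(x, y)) (hxy : x ≠ y)
    (hpos : 0 < μbar (coalEvent x y)) : ∃ g ∈ supp ν, g x = g y := by
  obtain ⟨g, hg, hninj⟩ := exists_mem_supp_not_injective hiid hxy hpos
  refine ⟨g, hg, by_contra fun hgxy => hninj ?_⟩
  exact (gluesOnly_of_mem_supp hiid honly hg).injective_of_apply_ne hgxy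

theorem pair_eq_of_mem_supp [Finite S] (hiid : IsIID ν μbar)
    (honly : ∀ a b, a ≠ b → 0 < μbar (coalEvent a b) → s(a, b) = s(x, y)) (hxy : x ≠ y)
    (hpos : 0 < μbar (coalEvent x y)) {f : S → S} (hf : f ∈ supp ν) {a b : S}
    (ha : f a = x) (hb : f b = y) : s(a, b) = s(x, y) := by
  obtain ⟨g, hg, hgxy⟩ := exists_mem_supp_apply_eq hiid honly hxy hpos
  refine gluesOnly_comp_of_mem_supp hiid honly hf hg a b ?_ (by simp [ha, hb, hgxy])
  rintro rfl
  exact hxy (ha.symm.trans hb)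

end Coalescence

section Sums

open Finset

variable [Fintype S] [DecidableEq S] {P : S → S → ℝ}

theorem sum_sum_eq_sum_mul_card {w : (S → S) → ℝ} (hw : ∀ i j, P i j = ∑ f with f i = j, w f)
    (I J : Finset S) : ∑ i ∈ I, ∑ j ∈ J, P i j = ∑ f, w f * #{i ∈ I | f i ∈ J} := by
  simp_rw [hw, sum_filter]
  calc ∑ i ∈ I, ∑ j ∈ J, ∑ f, (if f i = j then w f else 0)
      = ∑ i ∈ I, ∑ f, ∑ j ∈ J, (if f i = j then w f else 0) :=
        sum_congr rfl fun i _ => sum_comm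
    _ = ∑ f, ∑ i ∈ I, (if f i ∈ J then w f else 0) := by
        rw [sum_comm]
        simp_rw [sum_ite_eq]
    _ = ∑ f, w f * #{i ∈ I | f i ∈ J} := by
        simp [← sum_filter, mul_comm]

variable [MeasurableSpace S] [MeasurableSingletonClass S] {ν : Measure (S → S)} [IsFiniteMeasure ν]

theorem Consistent.apply_eq_sum_toReal (hP : ∀ i j, 0 ≤ P i j) (hcons : Consistent P ν)
    (i j : S) : P i j = ∑ f with f i = j, (ν {f}).toReal := by
  rw [← ENNReal.toReal_sum fun f _ => measure_ne_top ν _, sum_measure_singleton,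
    ← ENNReal.toReal_ofReal (hP i j), ← hcons i j]
  congr 2
  ext f
  simp

theorem sum_compl_pair_eq (hP : ∀ i j, 0 ≤ P i j) (hcons : Consistent P ν)
    {μbar : Measure (ℕ → S → S)} (hiid : IsIID ν μbar) {x y : S} (hxy : x ≠ y)
    (hpos : 0 < μbar (coalEvent x y))
    (honly : ∀ a b, a ≠ b → 0 < μbar (coalEvent a b) → s(a, b) = s(x, y)) :
    ∑ j ∈ {x, y}ᶜ, P x j = ∑ j ∈ {x, y}ᶜ, P y j ∧
      ∑ j ∈ {x, y}ᶜ, P x j = ∑ i ∈ {x, y}ᶜ, (P i x + P i y) := by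
  set A : Finset S := {x, y}
  have hw := hcons.apply_eq_sum_toReal hP
  have hrow (z : S) : ∑ j ∈ Aᶜ, P z j = ∑ f, (ν {f}).toReal * if f z ∈ A then 0 else 1 := by
    simpa [filter_singleton, apply_ite] using sum_sum_eq_sum_mul_card hw {z} Aᶜ
  have hcol : ∑ i ∈ Aᶜ, (P i x + P i y) =
      ∑ f, (ν {f}).toReal * #{i ∈ Aᶜ | f i ∈ A} := by
    rw [← sum_sum_eq_sum_mul_card hw]
    exact sum_congr rfl fun i _ => (sum_pair hxy).symm
  have hsupp {f : S → S} (hf : (ν {f}).toReal ≠ 0) :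
      GluesOnly x y f ∧ ∀ a b, f a = x → f b = y → s(a, b) = s(x, y) := by
    have hf : f ∈ supp ν := show 0 < ν {f} from
      pos_iff_ne_zero.2 fun h0 => hf (by rw [h0, ENNReal.toReal_zero])
    exact ⟨gluesOnly_of_mem_supp hiid honly hf,
      fun a b => pair_eq_of_mem_supp hiid honly hxy hpos hf⟩
  rw [hrow x, hrow y, hcol]
  constructor
  all_goals refine sum_congr rfl fun f _ => ?_
  all_goals rcases eq_or_ne (ν {f}).toReal 0 with h | h
  · simp [h]
  · obtain ⟨hf, hpull⟩ := hsupp h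
    have hmem : f x ∈ A ↔ f y ∈ A := hf.apply_mem_pair_iff hpull
    simp only [hmem]
  · simp [h]
  · obtain ⟨hf, hpull⟩ := hsupp h
    rw [hf.card_filter_apply_mem_pair hpull hxy]
    split_ifs <;> simp

end Sums

theorem stmt16 (n : ℕ) (hn : 3 ≤ n)
    [MeasurableSpace (Fin n)] [DiscreteMeasurableSpace (Fin n)]
    (P : Fin n → Fin n → ℝ) (hP : IsStochastic P)
    (ν : Measure (Fin n → Fin n)) [IsProbabilityMeasure ν] (hcons : Consistent P ν)
    (μbar : Measure (ℕ → Fin n → Fin n))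
    (hiid : IsIID ν μbar)
    (hpos : 0 < μbar (coalEvent (⟨0, by omega⟩ : Fin n) (⟨1, by omega⟩ : Fin n)))
    (honly : ∀ i j : Fin n, i ≠ j → 0 < μbar (coalEvent i j) →
      (i = (⟨0, by omega⟩ : Fin n) ∧ j = (⟨1, by omega⟩ : Fin n)) ∨
      (i = (⟨1, by omega⟩ : Fin n) ∧ j = (⟨0, by omega⟩ : Fin n))) :
    (∑ j ∈ Finset.univ.filter (fun j : Fin n => 2 ≤ (j : ℕ)),
        P (⟨0, by omega⟩ : Fin n) j) =
      (∑ j ∈ Finset.univ.filter (fun j : Fin n => 2 ≤ (j : ℕ)),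
        P (⟨1, by omega⟩ : Fin n) j) ∧
    (∑ j ∈ Finset.univ.filter (fun j : Fin n => 2 ≤ (j : ℕ)),
        P (⟨0, by omega⟩ : Fin n) j) =
      (∑ i ∈ Finset.univ.filter (fun i : Fin n => 2 ≤ (i : ℕ)),
        (P i (⟨0, by omega⟩ : Fin n) + P i (⟨1, by omega⟩ : Fin n))) := by
  have hA : Finset.univ.filter (fun j : Fin n => 2 ≤ (j : ℕ)) =
      {(⟨0, by omega⟩ : Fin n), ⟨1, by omega⟩}ᶜ := by
    ext j
    simp only [Finset.mem_filter, Finset.mem_univ, true_and, Finset.mem_compl,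
      Finset.mem_insert, Finset.mem_singleton, Fin.ext_iff, not_or]
    omega
  rw [hA]
  exact sum_compl_pair_eq hP.1 hcons hiid (by simp) hpos
    fun a b hab h => Sym2.eq_iff.2 (honly a b hab h)

end CFTP
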